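/- arXiv:2010.08356 — 3 statements merged into one kernel-verified Lean document; each statement's English description precedes it below -/
import Mathlib

section
/- For every nonempty finite subset σ ⊆ {1, …, n}, the Čech filtration value x ↦ r_σ(x) is 1-Lipschitz with respect to the sup metric on (ℝ^d)^n: for all x, y ∈ (ℝ^d)^n, |r_σ(x) − r_σ(y)| ≤ max_{1 ≤ i ≤ n} ‖x_i − y_i‖. -/
/-- The Čech filtration value of a nonempty finite subset `σ ⊆ {1, …, n}` at a point
configuration `x ∈ (ℝ^d)^n`: `r_σ(x) = inf_{y ∈ ℝ^d} max_{j ∈ σ} ‖y − x_j‖`. -/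
noncomputable def cechVal {d n : ℕ} (x : Fin n → EuclideanSpace ℝ (Fin d))
    (σ : Finset (Fin n)) (hσ : σ.Nonempty) : ℝ :=
  ⨅ y : EuclideanSpace ℝ (Fin d), σ.sup' hσ fun j => ‖y - x j‖

lemma cechVal_bdd {d n : ℕ} (x : Fin n → EuclideanSpace ℝ (Fin d))
    (σ : Finset (Fin n)) (hσ : σ.Nonempty) :
    BddBelow (Set.range fun y : EuclideanSpace ℝ (Fin d) => σ.sup' hσ fun j => ‖y - x j‖) := by
  refine ⟨0, ?_⟩
  rintro _ ⟨z, rfl⟩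
  obtain ⟨j, hj⟩ := hσ
  exact le_trans (norm_nonneg (z - x j)) (Finset.le_sup' (fun j => ‖z - x j‖) hj)

lemma cechVal_sub_le {d n : ℕ} (σ : Finset (Fin n)) (hσ : σ.Nonempty)
    (x y : Fin n → EuclideanSpace ℝ (Fin d)) {hne : (Finset.univ : Finset (Fin n)).Nonempty} :
    cechVal x σ hσ - cechVal y σ hσ ≤
      Finset.univ.sup' hne (fun i => ‖x i - y i‖) := by
  set E := Finset.univ.sup' hne (fun i => ‖x i - y i‖)
  have h : cechVal x σ hσ - E ≤ cechVal y σ hσ := by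
    refine le_ciInf fun z => sub_le_iff_le_add.mpr ?_
    calc cechVal x σ hσ ≤ σ.sup' hσ fun j => ‖z - x j‖ :=
        ciInf_le (cechVal_bdd x σ hσ) z
    _ ≤ (σ.sup' hσ fun j => ‖z - y j‖) + E := by
        refine Finset.sup'_le _ _ fun j hj => ?_
        calc ‖z - x j‖ ≤ ‖z - y j‖ + ‖y j - x j‖ := by
              simpa using norm_sub_le_norm_sub_add_norm_sub z (y j) (x j)
          _ ≤ (σ.sup' hσ fun j => ‖z - y j‖) + E := by
              refine add_le_add (Finset.le_sup' (fun j => ‖z - y j‖) hj) ?_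
              rw [norm_sub_rev]
              exact Finset.le_sup' (fun i => ‖x i - y i‖) (Finset.mem_univ j)
  linarith

/-- The Čech filtration value is 1-Lipschitz for the sup metric on `(ℝ^d)^n`:
`|r_σ(x) − r_σ(y)| ≤ max_{1 ≤ i ≤ n} ‖x_i − y_i‖`. -/
theorem cech_filtration_lipschitz {d n : ℕ} (σ : Finset (Fin n)) (hσ : σ.Nonempty)
    (x y : Fin n → EuclideanSpace ℝ (Fin d)) :
    |cechVal x σ hσ - cechVal y σ hσ| ≤
      Finset.univ.sup' ⟨hσ.choose, Finset.mem_univ _⟩ (fun i => ‖x i - y i‖) := by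
  rw [abs_sub_le_iff]
  constructor
  · exact cechVal_sub_le σ hσ x y
  · have := cechVal_sub_le σ hσ y x (hne := ⟨hσ.choose, Finset.mem_univ _⟩)
    simpa [norm_sub_rev] using this
end

section
/- If the weight function f : ℝ^d → ℝ is L-Lipschitz (for the Euclidean norm), then for every nonempty finite subset σ ⊆ {1, …, n} the weighted Rips filtration value x ↦ Φ_σ(x) is (2 + 2L)-Lipschitz with respect to the sup metric on (ℝ^d)^n: |Φ_σ(x) − Φ_σ(y)| ≤ (2 + 2L) · max_{1 ≤ i ≤ n} ‖x_i − y_i‖. -/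
/-- The weighted Rips filtration value of a pair `{i, j}` with `i ≠ j`:
`Φ_{{i,j}}(x) = max(2 f(x_i), 2 f(x_j), ‖x_i − x_j‖ + f(x_i) + f(x_j))`.
For `i = j` this expression equals `2 f(x_i)` (since `‖x_i − x_i‖ = 0`), the
filtration value of the singleton `{i}`. -/
noncomputable def wRipsPairVal {d n : ℕ} (f : EuclideanSpace ℝ (Fin d) → ℝ)
    (x : Fin n → EuclideanSpace ℝ (Fin d)) (i j : Fin n) : ℝ :=
  max (max (2 * f (x i)) (2 * f (x j))) (‖x i - x j‖ + f (x i) + f (x j))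

/-- The weighted Rips filtration value of a nonempty finite subset `σ ⊆ {1, …, n}`:
`Φ_σ(x) = max_{i,j ∈ σ} Φ_{{i,j}}(x)`.  For a singleton `σ = {j}` this equals
`2 f(x_j)`, and for `|σ| ≥ 2` it equals the maximum of `Φ_{{i,j}}(x)` over the pairs
`i ≠ j` in `σ` (diagonal terms being dominated), as in the usual definition. -/
noncomputable def wRipsVal {d n : ℕ} (f : EuclideanSpace ℝ (Fin d) → ℝ)
    (x : Fin n → EuclideanSpace ℝ (Fin d)) (σ : Finset (Fin n)) (hσ : σ.Nonempty) : ℝ :=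
  (σ ×ˢ σ).sup' (hσ.product hσ) fun ij => wRipsPairVal f x ij.1 ij.2

lemma wRipsPairBound {d n : ℕ} (L M : ℝ) (hL : 0 ≤ L)
    (f : EuclideanSpace ℝ (Fin d) → ℝ)
    (hf : ∀ a b : EuclideanSpace ℝ (Fin d), |f a - f b| ≤ L * ‖a - b‖)
    (x y : Fin n → EuclideanSpace ℝ (Fin d))
    (hM : ∀ i, ‖x i - y i‖ ≤ M) (i j : Fin n) :
    |wRipsPairVal f x i j - wRipsPairVal f y i j| ≤ (2 + 2 * L) * M := by
  have hM0 : 0 ≤ M := le_trans (norm_nonneg _) (hM i)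
  have hni : ‖x i - y i‖ ≤ M := hM i
  have hnj : ‖x j - y j‖ ≤ M := hM j
  have hLi : |f (x i) - f (y i)| ≤ L * M :=
    (hf (x i) (y i)).trans (mul_le_mul_of_nonneg_left hni hL)
  have hLj : |f (x j) - f (y j)| ≤ L * M :=
    (hf (x j) (y j)).trans (mul_le_mul_of_nonneg_left hnj hL)
  have hd : |‖x i - x j‖ - ‖y i - y j‖| ≤ 2 * M := by
    have h1 : |‖x i - x j‖ - ‖y i - y j‖| ≤ ‖(x i - x j) - (y i - y j)‖ :=
      abs_norm_sub_norm_le _ _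
    have h2 : ‖(x i - x j) - (y i - y j)‖ ≤ ‖x i - y i‖ + ‖x j - y j‖ := by
      have he : (x i - x j) - (y i - y j) = (x i - y i) - (x j - y j) := by abel
      rw [he]; exact norm_sub_le _ _
    linarith
  have b1 : |2 * f (x i) - 2 * f (y i)| ≤ (2 + 2 * L) * M := by
    rw [show 2 * f (x i) - 2 * f (y i) = 2 * (f (x i) - f (y i)) by ring, abs_mul, abs_two]
    nlinarith
  have b2 : |2 * f (x j) - 2 * f (y j)| ≤ (2 + 2 * L) * M := by
    rw [show 2 * f (x j) - 2 * f (y j) = 2 * (f (x j) - f (y j)) by ring, abs_mul, abs_two]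
    nlinarith
  have b3 : |(‖x i - x j‖ + f (x i) + f (x j)) - (‖y i - y j‖ + f (y i) + f (y j))| ≤
      (2 + 2 * L) * M := by
    have he : (‖x i - x j‖ + f (x i) + f (x j)) - (‖y i - y j‖ + f (y i) + f (y j)) =
        (‖x i - x j‖ - ‖y i - y j‖) + (f (x i) - f (y i)) + (f (x j) - f (y j)) := by ring
    rw [he]
    have ha := abs_add_le ((‖x i - x j‖ - ‖y i - y j‖) + (f (x i) - f (y i))) (f (x j) - f (y j))
    have hb := abs_add_le (‖x i - x j‖ - ‖y i - y j‖) (f (x i) - f (y i))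
    nlinarith
  unfold wRipsPairVal
  have h1 := abs_max_sub_max_le_max (max (2 * f (x i)) (2 * f (x j)))
    (‖x i - x j‖ + f (x i) + f (x j)) (max (2 * f (y i)) (2 * f (y j)))
    (‖y i - y j‖ + f (y i) + f (y j))
  have h2 := abs_max_sub_max_le_max (2 * f (x i)) (2 * f (x j)) (2 * f (y i)) (2 * f (y j))
  refine h1.trans (max_le (h2.trans (max_le b1 b2)) b3)

/-- If the weight function `f` is `L`-Lipschitz for the Euclidean norm, then the weighted
Rips filtration value is `(2 + 2L)`-Lipschitz for the sup metric on `(ℝ^d)^n`: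
`|Φ_σ(x) − Φ_σ(y)| ≤ (2 + 2L) · max_{1 ≤ i ≤ n} ‖x_i − y_i‖`. -/
theorem weighted_rips_filtration_lipschitz {d n : ℕ} (L : ℝ)
    (f : EuclideanSpace ℝ (Fin d) → ℝ)
    (hf : ∀ a b : EuclideanSpace ℝ (Fin d), |f a - f b| ≤ L * ‖a - b‖)
    (σ : Finset (Fin n)) (hσ : σ.Nonempty)
    (x y : Fin n → EuclideanSpace ℝ (Fin d)) :
    |wRipsVal f x σ hσ - wRipsVal f y σ hσ| ≤
      (2 + 2 * L) * Finset.univ.sup' ⟨hσ.choose, Finset.mem_univ _⟩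
        (fun i => ‖x i - y i‖) := by
  set M := Finset.univ.sup' ⟨hσ.choose, Finset.mem_univ _⟩ (fun i => ‖x i - y i‖) with hMdef
  have hM : ∀ i, ‖x i - y i‖ ≤ M := fun i => Finset.le_sup' (fun i => ‖x i - y i‖) (Finset.mem_univ i)
  by_cases hxy : ∀ i, x i = y i
  · have hx : x = y := funext hxy
    subst hx
    have hM0 : M = 0 := by
      apply le_antisymm
      · apply Finset.sup'_le; intro i _; simp
      · exact le_trans (norm_nonneg _) (hM hσ.choose)
    simp [hM0]
  · push_neg at hxy
    obtain ⟨k, hk⟩ := hxy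
    have hkpos : 0 < ‖x k - y k‖ := by
      rw [norm_pos_iff]; exact sub_ne_zero_of_ne hk
    have hL : 0 ≤ L := by
      have h0 : 0 ≤ L * ‖x k - y k‖ := le_trans (abs_nonneg _) (hf (x k) (y k))
      exact nonneg_of_mul_nonneg_right (by linarith [h0] : (0:ℝ) ≤ ‖x k - y k‖ * L) hkpos
    have key : ∀ p ∈ σ ×ˢ σ,
        |wRipsPairVal f x p.1 p.2 - wRipsPairVal f y p.1 p.2| ≤ (2 + 2 * L) * M :=
      fun p _ => wRipsPairBound L M hL f hf x y hM p.1 p.2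
    rw [abs_le]
    constructor
    · rw [neg_le, neg_sub, sub_le_iff_le_add]
      apply Finset.sup'_le
      intro p hp
      have h1 := (abs_le.mp (key p hp)).1
      have h2 : wRipsPairVal f x p.1 p.2 ≤ wRipsVal f x σ hσ :=
        Finset.le_sup' (fun ij => wRipsPairVal f x ij.1 ij.2) hp
      linarith
    · rw [sub_le_iff_le_add]
      apply Finset.sup'_le
      intro p hp
      have h1 := (abs_le.mp (key p hp)).2
      have h2 : wRipsPairVal f y p.1 p.2 ≤ wRipsVal f y σ hσ :=
        Finset.le_sup' (fun ij => wRipsPairVal f y ij.1 ij.2) hp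
      linarith
end

section
/- For any fixed integer 1 ≤ k ≤ p and any fixed t ∈ ℝ, the persistence landscape value λ(k, t), viewed as a function (ℝ²)^p → ℝ sending D = ((b_1, d_1), …, (b_p, d_p)) to the k-th largest value among Λ(b_1, d_1, t), …, Λ(b_p, d_p, t), is 1-Lipschitz with respect to the metric d(D, D') = max_{1 ≤ i ≤ p} max(|b_i − b_i'|, |d_i − d_i'|). -/
/-! Each tent value `Λ(b, d, t)` is built from `t - b` and `d - t` by `min` and `max`, so it is
1-Lipschitz in `(b, d)` for the max-norm. Taking the `k`-th largest entry of a vector is monotone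
for the pointwise order and commutes with adding a constant, so moving every entry by at most `ε`
moves the `k`-th largest one by at most `ε`. -/

/-- The tent function of a persistence diagram point with birth `b` and death `d`,
evaluated at `t`: `Λ(b, d, t) = max(0, min(t − b, d − t))`. -/
noncomputable def tent (b d t : ℝ) : ℝ := max 0 (min (t - b) (d - t))

/-- The `k`-th largest coordinate of a vector `x ∈ ℝ^n` (for `1 ≤ k ≤ n`), counted with
multiplicity: the entry at position `n - k` of the non-decreasing rearrangement of `x`. -/
noncomputable def kthLargest {n : ℕ} (x : Fin n → ℝ) (k : ℕ)
    (hk : 1 ≤ k) (hkn : k ≤ n) : ℝ :=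
  (x ∘ Tuple.sort x) ⟨n - k, by omega⟩

/-- The persistence landscape value `λ(k, t)` of a diagram
`D = ((b_1, d_1), …, (b_p, d_p)) ∈ (ℝ²)^p`: the `k`-th largest value among the tent
functions `Λ(b_i, d_i, t)`, `i = 1, …, p`. -/
noncomputable def landscape {p : ℕ} (D : Fin p → ℝ × ℝ) (k : ℕ)
    (hk : 1 ≤ k) (hkp : k ≤ p) (t : ℝ) : ℝ :=
  kthLargest (fun i => tent (D i).1 (D i).2 t) k hk hkp

open Finset in
theorem Equiv.Perm.card_filter_comp {ι : Type*} [Fintype ι] (p : ι → Prop) [DecidablePred p]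
    (σ : Equiv.Perm ι) : #{i | p (σ i)} = #{i | p i} := by
  simp only [card_filter]
  exact Equiv.sum_comp σ fun i => if p i then 1 else 0

namespace Tuple

open Finset

variable {n : ℕ} {α β : Type*} [LinearOrder α]

theorem comp_sort_le_comp_sort {f g : Fin n → α} (h : f ≤ g) : f ∘ sort f ≤ g ∘ sort g := by
  intro j
  -- the `j`-th sorted entry is `≤ a` iff more than `j` entries are `≤ a`,
  -- and passing from `g` to `f ≤ g` only adds such entries
  set a := g (sort g j)
  have hg : j < #{i | g (sort g i) ≤ a} :=
    (lt_card_le_iff_apply_le_of_monotone (monotone_sort g)).2 le_rfl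
  have hcard : #{i | g i ≤ a} ≤ #{i | f i ≤ a} :=
    card_le_card <| monotone_filter_right _ fun i _ => (h i).trans
  rw [(sort g).card_filter_comp (g · ≤ a)] at hg
  rw [← (sort f).card_filter_comp (f · ≤ a)] at hcard
  exact (lt_card_le_iff_apply_le_of_monotone (monotone_sort f)).1 (hg.trans_le hcard)

theorem _root_.Monotone.comp_sort_comp [LinearOrder β] {g : α → β} (hg : Monotone g)
    (f : Fin n → α) : (g ∘ f) ∘ sort (g ∘ f) = g ∘ (f ∘ sort f) :=
  (comp_sort_eq_comp_iff_monotone.2 (hg.comp (monotone_sort f))).symm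

end Tuple

section kthLargest

variable {n : ℕ} (k : ℕ) (hk : 1 ≤ k) (hkn : k ≤ n)

theorem kthLargest_mono {x y : Fin n → ℝ} (h : x ≤ y) :
    kthLargest x k hk hkn ≤ kthLargest y k hk hkn :=
  Tuple.comp_sort_le_comp_sort h _

theorem kthLargest_add_const (x : Fin n → ℝ) (c : ℝ) :
    kthLargest (fun i => x i + c) k hk hkn = kthLargest x k hk hkn + c :=
  congrFun ((monotone_id.add_const c).comp_sort_comp x) _

theorem abs_kthLargest_sub_kthLargest_le {x y : Fin n → ℝ} {ε : ℝ} (h : ∀ i, |x i - y i| ≤ ε) :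
    |kthLargest x k hk hkn - kthLargest y k hk hkn| ≤ ε := by
  have le_add {u v : Fin n → ℝ} (huv : ∀ i, u i - v i ≤ ε) :
      kthLargest u k hk hkn - kthLargest v k hk hkn ≤ ε := by
    rw [sub_le_iff_le_add', ← kthLargest_add_const]
    exact kthLargest_mono k hk hkn fun i => sub_le_iff_le_add'.1 (huv i)
  exact abs_sub_le_iff.2 ⟨le_add fun i => (abs_sub_le_iff.1 (h i)).1,
    le_add fun i => (abs_sub_le_iff.1 (h i)).2⟩

end kthLargest

theorem abs_tent_sub_tent_le (b d b' d' t : ℝ) :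
    |tent b d t - tent b' d' t| ≤ max |b - b'| |d - d'| := by
  unfold tent
  rw [max_comm 0, max_comm 0]
  calc |max (min (t - b) (d - t)) 0 - max (min (t - b') (d' - t)) 0|
      ≤ |min (t - b) (d - t) - min (t - b') (d' - t)| := abs_max_sub_max_le_abs _ _ _
    _ ≤ max |(t - b) - (t - b')| |(d - t) - (d' - t)| := abs_min_sub_min_le_max _ _ _ _
    _ = max |b - b'| |d - d'| := by
      rw [sub_sub_sub_cancel_left, sub_sub_sub_cancel_right, abs_sub_comm b']

/-- For fixed `1 ≤ k ≤ p` and `t ∈ ℝ`, the persistence landscape value `λ(k, t)` is a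
1-Lipschitz function of the diagram `D ∈ (ℝ²)^p`, with respect to the metric
`d(D, D') = max_{1 ≤ i ≤ p} max(|b_i − b_i'|, |d_i − d_i'|)`. -/
theorem landscape_lipschitz {p : ℕ} (k : ℕ) (hk : 1 ≤ k) (hkp : k ≤ p) (t : ℝ)
    (D D' : Fin p → ℝ × ℝ) :
    |landscape D k hk hkp t - landscape D' k hk hkp t| ≤
      Finset.univ.sup' ⟨⟨0, by omega⟩, Finset.mem_univ _⟩
        (fun i => max |(D i).1 - (D' i).1| |(D i).2 - (D' i).2|) :=
  abs_kthLargest_sub_kthLargest_le k hk hkp fun i =>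
    (abs_tent_sub_tent_le _ _ _ _ t).trans
      (Finset.le_sup' (fun i => max |(D i).1 - (D' i).1| |(D i).2 - (D' i).2|) (Finset.mem_univ i))
end
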